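/- Let G₀ = ⟨a, b | a^{2k+1} b², (a^k b)^{2k+1} a^{2k+1} (a^k b)^{2k+1}⟩, let ξ be a primitive (2k+1)-st root of unity, and let θ be an integer. Then the assignments ρ_θ(a) = diag(t ξ^{−θ}, t ξ^{θ}) and ρ_θ(b) = [[0, t^{−k−1} ξ^{kθ}], [t^{−k} ξ^{−kθ}, 0]] (2×2 matrices over ℂ[t, t^{-1}]) extend to a group homomorphism ρ_θ : G₀ → GL₂(ℂ[t^{±1}]), i.e. both relators are sent to the identity matrix. -/

import Mathlib

/-!
Write `n = 2k + 1`. Since `ξ ^ n = 1`, `ρ(a) ^ n` is the scalar matrix `t ^ n`, and `ρ(b) ^ 2` is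
the scalar `t ^ (-n)`, which kills the first relator. In `ρ(a ^ k b) = !![0, t⁻¹; 1, 0] =: N` the
roots of unity cancel, and `N ^ 2 = t⁻¹` is scalar, so the second relator maps to
`t ^ n • N ^ (2n) = 1`. The first relation exhibits one-sided inverses of `ρ(a)` and `ρ(b)`, which
for square matrices over a commutative ring are two-sided, so `ρ` factors through `G₀`.
-/

open LaurentPolynomial Matrix

/-- Relators of `G₀ = ⟨a, b | a^{2k+1} b², (a^k b)^{2k+1} a^{2k+1} (a^k b)^{2k+1}⟩`. -/
def G0Rels (k : ℕ) : Set (FreeGroup (Fin 2)) :=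
  {FreeGroup.of 0 ^ (2 * k + 1) * FreeGroup.of 1 ^ 2,
   (FreeGroup.of 0 ^ k * FreeGroup.of 1) ^ (2 * k + 1) * FreeGroup.of 0 ^ (2 * k + 1) *
     (FreeGroup.of 0 ^ k * FreeGroup.of 1) ^ (2 * k + 1)}

section
variable {R : Type*} [CommRing R]

theorem C_mul_T_mul_C_mul_T (a b : R) (m n : ℤ) :
    C a * T m * (C b * T n) = (C (a * b) * T (m + n) : R[T;T⁻¹]) := by
  rw [map_mul, T_add]; ring

theorem C_mul_T_pow (a : R) (m : ℤ) (n : ℕ) :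
    (C a * T m : R[T;T⁻¹]) ^ n = C (a ^ n) * T (n * m) := by
  rw [mul_pow, ← map_pow, T_pow]

theorem Matrix.fin_two_diag_pow (a d : R) (n : ℕ) :
    !![a, 0; 0, d] ^ n = !![a ^ n, 0; 0, d ^ n] := by
  rw [← diagonal_vec2, diagonal_pow, ← diagonal_vec2]
  congr 1; ext i; fin_cases i <;> rfl

theorem Matrix.fin_two_antidiag_sq (b c : R) :
    !![0, b; c, 0] ^ 2 = (b * c) • (1 : Matrix (Fin 2) (Fin 2) R) := by
  rw [sq, mul_fin_two, one_fin_two]; ext i j; fin_cases i <;> fin_cases j <;> simp [mul_comm]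

noncomputable def repA (α β : R) : Matrix (Fin 2) (Fin 2) R[T;T⁻¹] :=
  !![C α * T 1, 0; 0, C β * T 1]

noncomputable def repB (k : ℕ) (γ δ : R) : Matrix (Fin 2) (Fin 2) R[T;T⁻¹] :=
  !![0, C γ * T (-((k : ℤ) + 1)); C δ * T (-(k : ℤ)), 0]

variable {α β γ δ : R} {k : ℕ}

theorem repA_pow (n : ℕ) :
    repA α β ^ n = !![C (α ^ n) * T n, 0; 0, C (β ^ n) * T n] := by
  simp only [repA, fin_two_diag_pow, C_mul_T_pow, mul_one]

theorem repA_pow_eq_smul_one {n : ℕ} (hα : α ^ n = 1) (hβ : β ^ n = 1) :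
    repA α β ^ n = (T n : R[T;T⁻¹]) • 1 := by
  rw [repA_pow, hα, hβ, map_one, one_mul]
  ext i j; fin_cases i <;> fin_cases j <;> simp

theorem repB_sq (hγδ : γ * δ = 1) :
    repB k γ δ ^ 2 = (T (-(2 * k + 1 : ℕ)) : R[T;T⁻¹]) • 1 := by
  rw [repB, fin_two_antidiag_sq, C_mul_T_mul_C_mul_T, hγδ, map_one, one_mul]
  congr 2; push_cast; ring

theorem repA_pow_mul_repB (hγ : α ^ k * γ = 1) (hδ : β ^ k * δ = 1) :
    repA α β ^ k * repB k γ δ = !![0, T (-1); 1, 0] := by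
  rw [repA_pow, repB, mul_fin_two]
  simp only [mul_zero, zero_mul, add_zero, zero_add, C_mul_T_mul_C_mul_T, hγ, hδ, map_one, one_mul]
  congr <;> simp

theorem antidiag_T_neg_one_pow_two_mul (m : ℕ) :
    (!![0, T (-1); 1, 0] : Matrix (Fin 2) (Fin 2) R[T;T⁻¹]) ^ (2 * m) =
      (T (-m) : R[T;T⁻¹]) • 1 := by
  rw [pow_mul, fin_two_antidiag_sq, mul_one, smul_pow, one_pow, T_pow, mul_neg_one]

theorem repA_pow_mul_repB_sq_eq_one (hα : α ^ (2 * k + 1) = 1) (hβ : β ^ (2 * k + 1) = 1)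
    (hγδ : γ * δ = 1) : repA α β ^ (2 * k + 1) * repB k γ δ ^ 2 = 1 := by
  rw [repA_pow_eq_smul_one hα hβ, repB_sq hγδ, smul_mul_smul_comm, ← T_add, add_neg_cancel,
    T_zero, one_smul, mul_one]

theorem repA_repB_second_relator_eq_one (hα : α ^ (2 * k + 1) = 1)
    (hβ : β ^ (2 * k + 1) = 1) (hγ : α ^ k * γ = 1) (hδ : β ^ k * δ = 1) :
    (repA α β ^ k * repB k γ δ) ^ (2 * k + 1) * repA α β ^ (2 * k + 1) *
      (repA α β ^ k * repB k γ δ) ^ (2 * k + 1) = 1 := by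
  rw [repA_pow_mul_repB hγ hδ, repA_pow_eq_smul_one hα hβ, mul_smul_one, smul_mul_assoc,
    ← pow_add, ← two_mul, antidiag_T_neg_one_pow_two_mul, smul_smul, ← T_add, add_neg_cancel,
    T_zero, one_smul]

end

theorem repA_repB_relators_eq_one_of_pow_eq_one {K : Type*} [Field K] {ξ : K} {k : ℕ}
    (hξ : ξ ^ (2 * k + 1) = 1) (θ : ℤ) :
    repA (ξ ^ (-θ)) (ξ ^ θ) ^ (2 * k + 1) * repB k (ξ ^ ((k : ℤ) * θ)) (ξ ^ (-(k : ℤ) * θ)) ^ 2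
        = 1 ∧
      (repA (ξ ^ (-θ)) (ξ ^ θ) ^ k * repB k (ξ ^ ((k : ℤ) * θ)) (ξ ^ (-(k : ℤ) * θ))) ^
          (2 * k + 1) * repA (ξ ^ (-θ)) (ξ ^ θ) ^ (2 * k + 1) *
        (repA (ξ ^ (-θ)) (ξ ^ θ) ^ k * repB k (ξ ^ ((k : ℤ) * θ)) (ξ ^ (-(k : ℤ) * θ))) ^
          (2 * k + 1) = 1 := by
  have hξ0 : ξ ≠ 0 := by rintro rfl; simp at hξ
  have root_zpow (a : ℤ) : (ξ ^ a) ^ (2 * k + 1) = 1 := by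
    rw [← zpow_natCast, ← _root_.zpow_mul, mul_comm, _root_.zpow_mul, zpow_natCast, hξ,
      _root_.one_zpow]
  have zpow_mul_zpow {a b : ℤ} (h : a + b = 0) : ξ ^ a * ξ ^ b = 1 := by
    rw [← zpow_add₀ hξ0, h, zpow_zero]
  have zpow_pow (a : ℤ) : (ξ ^ a) ^ k = ξ ^ (a * k) := by rw [← zpow_natCast, ← _root_.zpow_mul]
  refine ⟨repA_pow_mul_repB_sq_eq_one (root_zpow _) (root_zpow _) (zpow_mul_zpow (by ring)),
    repA_repB_second_relator_eq_one (root_zpow _) (root_zpow _) ?_ ?_⟩ <;>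
  · rw [zpow_pow]; exact zpow_mul_zpow (by ring)

theorem PresentedGroup.exists_monoidHom_of_units {ι M : Type*} [Monoid M]
    {rels : Set (FreeGroup ι)} (u : ι → Mˣ) (h : ∀ r ∈ rels, FreeGroup.lift u r = 1) :
    ∃ ρ : PresentedGroup rels →* M, (∀ i, ρ (PresentedGroup.of i) = u i) ∧ ∀ g, IsUnit (ρ g) :=
  ⟨(Units.coeHom M).comp (PresentedGroup.toGroup h), fun i => by simp [toGroup.of],
    fun g => (PresentedGroup.toGroup h g).isUnit⟩

theorem metabelian_rep_well_defined_general (k : ℕ) (θ : ℤ) :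
    let ξ : ℂ := Complex.exp (2 * Real.pi * Complex.I / (2 * k + 1))
    let Ma : Matrix (Fin 2) (Fin 2) (LaurentPolynomial ℂ) :=
      !![LaurentPolynomial.C (ξ ^ (-θ)) * LaurentPolynomial.T 1, 0;
         0, LaurentPolynomial.C (ξ ^ θ) * LaurentPolynomial.T 1]
    let Mb : Matrix (Fin 2) (Fin 2) (LaurentPolynomial ℂ) :=
      !![0, LaurentPolynomial.C (ξ ^ ((k : ℤ) * θ)) * LaurentPolynomial.T (-((k : ℤ) + 1));
         LaurentPolynomial.C (ξ ^ (-(k : ℤ) * θ)) * LaurentPolynomial.T (-(k : ℤ)), 0]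
    Ma ^ (2 * k + 1) * Mb ^ 2 = 1 ∧
    (Ma ^ k * Mb) ^ (2 * k + 1) * Ma ^ (2 * k + 1) * (Ma ^ k * Mb) ^ (2 * k + 1) = 1 ∧
    ∃ ρ : PresentedGroup (G0Rels k) →* Matrix (Fin 2) (Fin 2) (LaurentPolynomial ℂ),
      ρ (PresentedGroup.of 0) = Ma ∧ ρ (PresentedGroup.of 1) = Mb ∧
      ∀ g, IsUnit (ρ g) := by
  intro ξ Ma Mb
  have hξ : ξ ^ (2 * k + 1) = 1 := by
    have := Complex.isPrimitiveRoot_exp (2 * k + 1) (by omega)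
    push_cast at this
    exact this.pow_eq_one
  obtain ⟨rel₁, rel₂⟩ := repA_repB_relators_eq_one_of_pow_eq_one hξ θ
  have hMa : IsUnit Ma := (isUnit_pow_iff (by omega)).mp (.of_mul_eq_one _ rel₁)
  have hMb : IsUnit Mb := (isUnit_pow_iff (by omega)).mp (.of_mul_eq_one_right _ rel₁)
  obtain ⟨ρ, hρ, hunit⟩ := PresentedGroup.exists_monoidHom_of_units (rels := G0Rels k)
    ![hMa.unit, hMb.unit] (by
    rintro r (rfl | rfl) <;> apply Units.ext <;>
      simp only [map_mul, map_pow, FreeGroup.lift_apply_of, cons_val_zero, cons_val_one,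
        Units.val_mul, Units.val_pow_eq_pow_val, IsUnit.unit_spec, Units.val_one]
    exacts [rel₁, rel₂])
  exact ⟨rel₁, rel₂, ρ, hρ 0, hρ 1, hunit⟩

theorem metabelian_rep_well_defined (k : ℕ) (hk : 0 < k) (θ : ℤ) :
    let ξ : ℂ := Complex.exp (2 * Real.pi * Complex.I / (2 * k + 1))
    let Ma : Matrix (Fin 2) (Fin 2) (LaurentPolynomial ℂ) :=
      !![LaurentPolynomial.C (ξ ^ (-θ)) * LaurentPolynomial.T 1, 0;
         0, LaurentPolynomial.C (ξ ^ θ) * LaurentPolynomial.T 1]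
    let Mb : Matrix (Fin 2) (Fin 2) (LaurentPolynomial ℂ) :=
      !![0, LaurentPolynomial.C (ξ ^ ((k : ℤ) * θ)) * LaurentPolynomial.T (-((k : ℤ) + 1));
         LaurentPolynomial.C (ξ ^ (-(k : ℤ) * θ)) * LaurentPolynomial.T (-(k : ℤ)), 0]
    Ma ^ (2 * k + 1) * Mb ^ 2 = 1 ∧
    (Ma ^ k * Mb) ^ (2 * k + 1) * Ma ^ (2 * k + 1) * (Ma ^ k * Mb) ^ (2 * k + 1) = 1 ∧
    ∃ ρ : PresentedGroup (G0Rels k) →* Matrix (Fin 2) (Fin 2) (LaurentPolynomial ℂ),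
      ρ (PresentedGroup.of 0) = Ma ∧ ρ (PresentedGroup.of 1) = Mb ∧
      ∀ g, IsUnit (ρ g) :=
  metabelian_rep_well_defined_general k θ
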